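/- For every i ≥ 1, all a₁, …, a_i ∈ A, and every permutation σ of {1, …, i}: [⋯[D a₁, a₂], …, a_i] = [⋯[D a_{σ(1)}, a_{σ(2)}], …, a_{σ(i)}]. In other words, the multilinear map (a₁,…,a_i) ↦ [⋯[D a₁, a₂], …, a_i] is symmetric in its arguments when these lie in the abelian subalgebra A. (Ungraded instance of the symmetry lemma of Voronov used in the proof of Proposition 5.3 of the paper.) -/

import Mathlib

/-!
Every permutation is a product of adjacent transpositions, so it suffices to swap two
neighbouring entries `a, b` of the list, which commute. Past the head, Jacobi turns
`⁅⁅y, a⁆, b⁆ - ⁅⁅y, b⁆, a⁆` into `⁅y, ⁅a, b⁆⁆ = 0`; at the head, the Leibniz rule turns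
`⁅D a, b⁆ - ⁅D b, a⁆` into `D ⁅a, b⁆ = 0`.
-/

/-- Iterated Lie bracket `[⋯[x, y₁], …, y_r]`, bracketing from the left. -/
def nestBr {M : Type*} [LieRing M] (x : M) (l : List M) : M :=
  l.foldl (fun y z => ⁅y, z⁆) x

/-- `[⋯[D a₁, a₂], …, a_r]`: the iterated bracket with `D` applied to the head. -/
def dnestBr {M : Type*} [LieRing M] (D : M → M) : List M → M
  | [] => 0
  | x :: xs => nestBr (D x) xs

/-- The list `(a_{σ(1)}, …, a_{σ(i)})` obtained by permuting the entries of `l`. -/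
def permList {M : Type*} (l : List M) (σ : Equiv.Perm (Fin l.length)) : List M :=
  List.ofFn (fun j => l.get (σ j))

section LieRing

variable {M : Type*} [LieRing M]

theorem lie_lie_right_comm_of_lie_eq_zero {a b : M} (h : ⁅a, b⁆ = 0) (y : M) :
    ⁅⁅y, a⁆, b⁆ = ⁅⁅y, b⁆, a⁆ := by
  have jacobi := leibniz_lie y a b
  rw [h, lie_zero, ← lie_skew a, eq_comm, add_neg_eq_zero] at jacobi
  exact jacobi

theorem nestBr_perm {l₁ l₂ : List M} (h : l₁.Perm l₂)
    (hl : ∀ x ∈ l₁, ∀ y ∈ l₁, ⁅x, y⁆ = 0) (y : M) : nestBr y l₁ = nestBr y l₂ :=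
  h.foldl_eq' (fun a ha b hb z => lie_lie_right_comm_of_lie_eq_zero (hl a ha b hb) z) y

variable (D : M → M) (hD : ∀ x y : M, D ⁅x, y⁆ = ⁅D x, y⁆ + ⁅x, D y⁆)
include hD

theorem map_zero_of_leibniz : D 0 = 0 := by
  simpa using hD 0 0

theorem lie_apply_comm_of_lie_eq_zero {a b : M} (h : ⁅a, b⁆ = 0) : ⁅D a, b⁆ = ⁅D b, a⁆ := by
  have leibniz := hD a b
  rw [h, map_zero_of_leibniz D hD, ← lie_skew a, eq_comm, add_neg_eq_zero] at leibniz
  exact leibniz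

theorem dnestBr_perm {l₁ l₂ : List M} (h : l₁.Perm l₂)
    (hl : ∀ x ∈ l₁, ∀ y ∈ l₁, ⁅x, y⁆ = 0) : dnestBr D l₁ = dnestBr D l₂ := by
  induction h with
  | nil => rfl
  | cons x h _ =>
    exact nestBr_perm h (fun a ha b hb => hl a (.tail x ha) b (.tail x hb)) (D x)
  | swap a b l =>
    have hba : ⁅b, a⁆ = 0 := hl b (by simp) a (by simp)
    simp only [dnestBr, nestBr, List.foldl_cons, lie_apply_comm_of_lie_eq_zero D hD hba]
  | trans h₁₂ _ ih₁₂ ih₂₃ =>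
    rw [ih₁₂ hl, ih₂₃ fun a ha b hb => hl a (h₁₂.mem_iff.2 ha) b (h₁₂.mem_iff.2 hb)]

end LieRing

theorem perm_permList {α : Type*} (l : List α) (σ : Equiv.Perm (Fin l.length)) :
    (permList l σ).Perm l := by
  simpa [permList, Function.comp_def, List.ofFn_get] using σ.ofFn_comp_perm l.get

theorem statement5_general {K M : Type*} [Field K] [LieRing M]
    [LieAlgebra K M] (A : LieSubalgebra K M)
    (hab : ∀ x ∈ A, ∀ y ∈ A, ⁅x, y⁆ = (0 : M))
    (D : M → M)
    (hDder : ∀ x y : M, D ⁅x, y⁆ = ⁅D x, y⁆ + ⁅x, D y⁆)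
    (l : List M) (hl : ∀ x ∈ l, x ∈ A)
    (σ : Equiv.Perm (Fin l.length)) :
    dnestBr D l = dnestBr D (permList l σ) := by
  have hcomm : ∀ x ∈ l, ∀ y ∈ l, ⁅x, y⁆ = 0 := fun x hx y hy => hab x (hl x hx) y (hl y hy)
  exact dnestBr_perm D hDder (perm_permList l σ).symm hcomm

/-- For every `i ≥ 1`, all `a₁, …, a_i` in an abelian Lie
subalgebra `A` of `M`, and every permutation `σ` of `{1,…,i}`:
`[⋯[D a₁, a₂], …, a_i] = [⋯[D a_{σ(1)}, a_{σ(2)}], …, a_{σ(i)}]`. -/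
theorem statement5 {K M : Type*} [Field K] [CharZero K] [LieRing M]
    [LieAlgebra K M] (A : LieSubalgebra K M)
    (hab : ∀ x ∈ A, ∀ y ∈ A, ⁅x, y⁆ = (0 : M))
    (D : M → M) (hDlin : IsLinearMap K D)
    (hDder : ∀ x y : M, D ⁅x, y⁆ = ⁅D x, y⁆ + ⁅x, D y⁆)
    (l : List M) (hne : l ≠ []) (hl : ∀ x ∈ l, x ∈ A)
    (σ : Equiv.Perm (Fin l.length)) :
    dnestBr D l = dnestBr D (permList l σ) :=
  statement5_general A hab D hDder l hl σ
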